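/- arXiv:1306.5516 — 2 statements merged into one kernel-verified Lean document; each statement's English description precedes it below -/
import Mathlib

section
/- Let f : I ⊂ [0,∞) → ℝ be n-times differentiable on I° with f^(n) ∈ L¹[a,b], a < b, and suppose |f^(n)|^q is s-convex on [a,b] for some s ∈ (0,1], q > 1, p = q/(q-1). Then for every λ ∈ [a,b]: |Σ_{m=1}^n (-1)^(n-m+2) [((λ-a)^m − (λ-b)^m)/m!] f^(m-1)(λ) + (-1)^n ∫_a^b f(x) dx| ≤ ((np+1)^(-1/p)/n!)(1/(s+1))^(1/q)[(λ-a)^(n+1)(|f^(n)(a)|^q + |f^(n)(λ)|^q)^(1/q) + (b-λ)^(n+1)(|f^(n)(b)|^q + |f^(n)(λ)|^q)^(1/q)]. -/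
open MeasureTheory intervalIntegral Finset

def sConvexOn (s : ℝ) (A : Set ℝ) (g : ℝ → ℝ) : Prop :=
  ∀ x ∈ A, ∀ y ∈ A, ∀ t ∈ Set.Icc (0:ℝ) 1,
    g (t * x + (1 - t) * y) ≤ t ^ s * g x + (1 - t) ^ s * g y

/-! Repeated integration by parts turns the left-hand side into
`∫_a^λ (x - a)^n / n! f⁽ⁿ⁾(x) dx + ∫_λ^b (x - b)^n / n! f⁽ⁿ⁾(x) dx`.
On each of the two intervals `[c, d]`, Hölder's inequality separates the polynomial weight, whose
`L^p` norm is explicit, from `f⁽ⁿ⁾`; and s-convexity bounds `|f⁽ⁿ⁾|^q` by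
`((d - x)/(d - c))^s |f⁽ⁿ⁾(c)|^q + ((x - c)/(d - c))^s |f⁽ⁿ⁾(d)|^q`,
whose integral is `(d - c)/(s + 1) (|f⁽ⁿ⁾(c)|^q + |f⁽ⁿ⁾(d)|^q)`. -/

open Set

theorem sConvexOn.le_of_mem_Icc {s : ℝ} {A : Set ℝ} {g : ℝ → ℝ} (h : sConvexOn s A g)
    {x y z : ℝ} (hx : x ∈ A) (hy : y ∈ A) (hxy : x < y) (hz : z ∈ Icc x y) :
    g z ≤ ((y - z) / (y - x)) ^ s * g x + ((z - x) / (y - x)) ^ s * g y := by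
  have hyx : 0 < y - x := sub_pos.2 hxy
  have ht : (y - z) / (y - x) ∈ Icc (0 : ℝ) 1 :=
    ⟨div_nonneg (by linarith [hz.2]) hyx.le, (div_le_one hyx).2 (by linarith [hz.1])⟩
  have hcomb : (y - z) / (y - x) * x + (1 - (y - z) / (y - x)) * y = z := by
    field_simp; ring
  have hcompl : 1 - (y - z) / (y - x) = (z - x) / (y - x) := by
    field_simp; ring
  have := h x hx y hy _ ht
  rwa [hcomb, hcompl] at this

theorem hasDerivAt_sub_pow_succ_div_factorial (n : ℕ) (c x : ℝ) :
    HasDerivAt (fun y => (y - c) ^ (n + 1) / ((n + 1).factorial : ℝ))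
      ((x - c) ^ n / (n.factorial : ℝ)) x := by
  refine ((((hasDerivAt_id x).sub_const c).pow (n + 1)).div_const _).congr_deriv ?_
  rw [Nat.factorial_succ, Nat.cast_mul]
  field_simp
  simp

theorem integral_sub_pow_succ_mul_deriv {g g' : ℝ → ℝ} {α β : ℝ} (n : ℕ) (c : ℝ)
    (hg : ∀ x ∈ uIcc α β, HasDerivAt g (g' x) x) (hg' : IntervalIntegrable g' volume α β) :
    ∫ x in α..β, (x - c) ^ (n + 1) / ((n + 1).factorial : ℝ) * g' x =
      (β - c) ^ (n + 1) / ((n + 1).factorial : ℝ) * g β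
        - (α - c) ^ (n + 1) / ((n + 1).factorial : ℝ) * g α
        - ∫ x in α..β, (x - c) ^ n / (n.factorial : ℝ) * g x :=
  integral_mul_deriv_eq_deriv_mul (fun x _ => hasDerivAt_sub_pow_succ_div_factorial n c x) hg
    ((by fun_prop : Continuous _).intervalIntegrable _ _) hg'

theorem alternating_taylor_sum_add_integral_eq {f : ℝ → ℝ} {a b l : ℝ} (hal : a ≤ l)
    (hlb : l ≤ b) (n : ℕ)
    (hf : ∀ k < n, ∀ x ∈ Icc a b,
      HasDerivAt (iteratedDeriv k f) (iteratedDeriv (k + 1) f x) x)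
    (hint : IntervalIntegrable (iteratedDeriv n f) volume a b) :
    (∑ m ∈ Finset.Icc 1 n,
        (-1 : ℝ) ^ (n - m) * (((l - a) ^ m - (l - b) ^ m) / (m.factorial : ℝ))
          * iteratedDeriv (m - 1) f l) + (-1 : ℝ) ^ n * ∫ x in a..b, f x =
      (∫ x in a..l, (x - a) ^ n / (n.factorial : ℝ) * iteratedDeriv n f x)
        + ∫ x in l..b, (x - b) ^ n / (n.factorial : ℝ) * iteratedDeriv n f x := by
  have hl : l ∈ uIcc a b := mem_uIcc_of_le hal hlb
  induction n with
  | zero =>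
    simp only [iteratedDeriv_zero] at hint
    simp [integral_add_adjacent_intervals (hint.mono_set (uIcc_subset_uIcc_left hl))
      (hint.mono_set (uIcc_subset_uIcc_right hl))]
  | succ n ih =>
    have hderiv := hf n n.lt_succ_self
    have hcont : ContinuousOn (iteratedDeriv n f) (uIcc a b) := fun x hx =>
      (hderiv x (uIcc_of_le (hal.trans hlb) ▸ hx)).continuousAt.continuousWithinAt
    have ih := ih (fun k hk => hf k (hk.trans n.lt_succ_self)) hcont.intervalIntegrable
    have hsub : ∀ {α β}, α ∈ uIcc a b → β ∈ uIcc a b → ∀ x ∈ uIcc α β,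
        HasDerivAt (iteratedDeriv n f) (iteratedDeriv (n + 1) f x) x := fun hα hβ x hx =>
      hderiv x (uIcc_of_le (hal.trans hlb) ▸ uIcc_subset_uIcc hα hβ hx)
    rw [integral_sub_pow_succ_mul_deriv n a (hsub left_mem_uIcc hl)
        (hint.mono_set (uIcc_subset_uIcc_left hl)),
      integral_sub_pow_succ_mul_deriv n b (hsub hl right_mem_uIcc)
        (hint.mono_set (uIcc_subset_uIcc_right hl)),
      sum_Icc_succ_top (Nat.le_add_left 1 n)]
    have hsign : ∀ m ∈ Finset.Icc 1 n, (-1 : ℝ) ^ (n + 1 - m) = -(-1) ^ (n - m) :=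
      fun m hm => by rw [Nat.sub_add_comm (Finset.mem_Icc.1 hm).2, pow_succ, mul_neg_one]
    rw [sum_congr rfl fun m hm => by rw [hsign m hm]]
    simp only [neg_mul, sum_neg_distrib, Nat.sub_self, pow_zero, one_mul, Nat.add_sub_cancel,
      sub_self, ne_eq, Nat.add_eq_zero_iff, one_ne_zero, and_false, not_false_eq_true, zero_pow,
      zero_div, zero_mul, sub_zero, zero_sub]
    linear_combination -ih

theorem integral_div_sub_rpow {c d s : ℝ} (hcd : c ≤ d) (hs : 0 ≤ s) :
    ∫ x in c..d, ((x - c) / (d - c)) ^ s = (d - c) / (s + 1) := by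
  rcases hcd.eq_or_lt with rfl | hcd
  · simp
  have hdc : 0 < d - c := sub_pos.2 hcd
  rw [integral_comp_sub_right (fun x => (x / (d - c)) ^ s), sub_self]
  have hsplit : ∀ x ∈ uIcc 0 (d - c), (x / (d - c)) ^ s = x ^ s / (d - c) ^ s := fun x hx =>
    Real.div_rpow (uIcc_of_le hdc.le ▸ hx).1 hdc.le s
  rw [integral_congr hsplit, intervalIntegral.integral_div, integral_rpow (by left; linarith),
    Real.zero_rpow (by linarith), sub_zero, Real.rpow_add_one hdc.ne']
  field_simp

theorem integral_sConvex_envelope {c d s : ℝ} (hcd : c ≤ d) (hs : 0 ≤ s) (A B : ℝ) :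
    ∫ x in c..d, (((d - x) / (d - c)) ^ s * A + ((x - c) / (d - c)) ^ s * B) =
      (d - c) / (s + 1) * (A + B) := by
  have hreflect :
      ∫ x in c..d, ((d - x) / (d - c)) ^ s = ∫ x in c..d, ((x - c) / (d - c)) ^ s := by
    have hd : ∀ x, ((d - x) / (d - c)) ^ s = ((c + d - x - c) / (d - c)) ^ s := fun x => by
      ring_nf
    simp_rw [hd]
    rw [integral_comp_sub_left (fun x => ((x - c) / (d - c)) ^ s), add_sub_cancel_right,
      add_sub_cancel_left]
  rw [intervalIntegral.integral_add, intervalIntegral.integral_mul_const,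
    intervalIntegral.integral_mul_const, hreflect, integral_div_sub_rpow hcd hs]
  · ring
  all_goals exact Continuous.intervalIntegrable (by fun_prop) _ _

theorem integral_abs_sub_endpoint_rpow {c d e r : ℝ} (hcd : c ≤ d) (he : e = c ∨ e = d)
    (hr : -1 < r) : ∫ x in c..d, |x - e| ^ r = (d - c) ^ (r + 1) / (r + 1) := by
  have hleft : ∫ x in c..d, |x - c| ^ r = (d - c) ^ (r + 1) / (r + 1) := by
    have habs : ∀ x ∈ uIcc c d, |x - c| ^ r = (x - c) ^ r := fun x hx => by
      rw [abs_of_nonneg (sub_nonneg.2 (uIcc_of_le hcd ▸ hx).1)]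
    rw [integral_congr habs, integral_comp_sub_right (fun x => x ^ r), sub_self,
      integral_rpow (Or.inl hr), Real.zero_rpow (by linarith), sub_zero]
  rcases he with rfl | rfl
  · exact hleft
  · have hd : ∀ x, |x - e| = |c + e - x - c| := fun x => by rw [abs_sub_comm]; ring_nf
    simp_rw [hd]
    rw [integral_comp_sub_left (fun x => |x - c| ^ r), add_sub_cancel_right, add_sub_cancel_left,
      hleft]

theorem abs_integral_mul_le_of_abs_rpow_le {w g D : ℝ → ℝ} {c d p q : ℝ}
    (hpq : p.HolderConjugate q) (hcd : c ≤ d) (hw : Continuous w)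
    (hg : IntervalIntegrable g volume c d) (hD : IntervalIntegrable D volume c d)
    (hgD : ∀ x ∈ Ioc c d, |g x| ^ q ≤ D x) :
    |∫ x in c..d, w x * g x| ≤
      (∫ x in c..d, |w x| ^ p) ^ (1 / p) * (∫ x in c..d, D x) ^ (1 / q) := by
  simp only [integral_of_le hcd]
  have hDae : ∀ᵐ x ∂volume.restrict (Ioc c d), |g x| ^ q ≤ D x :=
    (ae_restrict_iff' measurableSet_Ioc).2 (ae_of_all _ hgD)
  have hgq : Integrable (fun x => |g x| ^ q) (volume.restrict (Ioc c d)) := by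
    refine hD.1.mono'
      (hg.1.aestronglyMeasurable.norm.aemeasurable.pow_const q).aestronglyMeasurable ?_
    filter_upwards [hDae] with x hx
    rwa [Real.norm_of_nonneg (by positivity)]
  have hgLq : MemLp g (ENNReal.ofReal q) (volume.restrict (Ioc c d)) := by
    refine (integrable_norm_rpow_iff hg.1.aestronglyMeasurable (by simpa using hpq.symm.pos)
      ENNReal.ofReal_ne_top).1 ?_
    simpa only [ENNReal.toReal_ofReal hpq.symm.nonneg, Real.norm_eq_abs] using hgq
  have hwLp : MemLp w (ENNReal.ofReal p) (volume.restrict (Ioc c d)) := by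
    obtain ⟨C, hC⟩ := (isCompact_Icc : IsCompact (Icc c d)).exists_bound_of_continuousOn
      hw.continuousOn
    exact MemLp.of_bound hw.aestronglyMeasurable C
      ((ae_restrict_iff' measurableSet_Ioc).2
        (ae_of_all _ fun x hx => hC x (Ioc_subset_Icc_self hx)))
  calc |∫ x in Ioc c d, w x * g x|
      ≤ ∫ x in Ioc c d, |w x| * |g x| := by
        simpa only [norm_mul, Real.norm_eq_abs] using
          norm_integral_le_integral_norm (fun x => w x * g x)
    _ ≤ (∫ x in Ioc c d, |w x| ^ p) ^ (1 / p) * (∫ x in Ioc c d, |g x| ^ q) ^ (1 / q) := by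
        simpa only [Real.norm_eq_abs] using integral_mul_norm_le_Lp_mul_Lq hpq hwLp hgLq
    _ ≤ (∫ x in Ioc c d, |w x| ^ p) ^ (1 / p) * (∫ x in Ioc c d, D x) ^ (1 / q) :=
        mul_le_mul_of_nonneg_left
          (Real.rpow_le_rpow (integral_nonneg fun x => by positivity)
            (integral_mono_ae hgq hD.1 hDae) (one_div_nonneg.2 hpq.symm.nonneg))
          (Real.rpow_nonneg (integral_nonneg fun x => by positivity) _)

theorem abs_integral_sub_pow_mul_le {g : ℝ → ℝ} {c d e s p q A B : ℝ} (n : ℕ)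
    (hpq : p.HolderConjugate q) (hs : 0 ≤ s) (hcd : c ≤ d) (he : e = c ∨ e = d)
    (hg : IntervalIntegrable g volume c d) (hAB : 0 ≤ A + B)
    (hgq : ∀ x ∈ Ioc c d,
      |g x| ^ q ≤ ((d - x) / (d - c)) ^ s * A + ((x - c) / (d - c)) ^ s * B) :
    |∫ x in c..d, (x - e) ^ n / (n.factorial : ℝ) * g x| ≤
      ((n * p + 1) ^ (-1 / p) / n.factorial) * (1 / (s + 1)) ^ (1 / q) *
        ((d - c) ^ (n + 1) * (A + B) ^ (1 / q)) := by
  have hp := hpq.pos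
  have hL : 0 ≤ d - c := sub_nonneg.2 hcd
  have hN : (0 : ℝ) < n.factorial := by positivity
  have hnp : 0 ≤ (n : ℝ) * p := mul_nonneg n.cast_nonneg hp.le
  have hK : 0 < (n : ℝ) * p + 1 := by linarith
  have hS : 0 ≤ 1 / (s + 1) := one_div_nonneg.2 (by linarith)
  have hweight : ∫ x in c..d, |(x - e) ^ n / (n.factorial : ℝ)| ^ p =
      (d - c) ^ (n * p + 1) / (n * p + 1) / (n.factorial : ℝ) ^ p := by
    have hpow : ∀ x,
        |(x - e) ^ n / (n.factorial : ℝ)| ^ p = |x - e| ^ (n * p) / (n.factorial : ℝ) ^ p :=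
      fun x => by
        rw [abs_div, abs_pow, Nat.abs_cast, Real.div_rpow (by positivity) hN.le,
          ← Real.rpow_natCast, ← Real.rpow_mul (abs_nonneg _)]
    simp_rw [hpow]
    rw [intervalIntegral.integral_div, integral_abs_sub_endpoint_rpow hcd he (by linarith)]
  have hLpow : (d - c) ^ ((n * p + 1) * (1 / p)) * (d - c) ^ (1 / q) = (d - c) ^ (n + 1) := by
    have hexp : (n * p + 1) * (1 / p) + 1 / q = n + 1 := by
      have := hpq.inv_add_inv_eq_one
      field_simp at this ⊢
      linarith
    rw [← Real.rpow_add' hL (by rw [hexp]; positivity), hexp]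
    exact_mod_cast Real.rpow_natCast (d - c) (n + 1)
  calc |∫ x in c..d, (x - e) ^ n / (n.factorial : ℝ) * g x|
      ≤ (∫ x in c..d, |(x - e) ^ n / (n.factorial : ℝ)| ^ p) ^ (1 / p) *
          (∫ x in c..d, (((d - x) / (d - c)) ^ s * A + ((x - c) / (d - c)) ^ s * B)) ^ (1 / q) :=
        abs_integral_mul_le_of_abs_rpow_le hpq hcd (by fun_prop) hg
          (Continuous.intervalIntegrable (by fun_prop) _ _) hgq
    _ = ((d - c) ^ (n * p + 1) / (n * p + 1) / (n.factorial : ℝ) ^ p) ^ (1 / p) *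
          ((d - c) / (s + 1) * (A + B)) ^ (1 / q) := by
        rw [hweight, integral_sConvex_envelope hcd hs]
    _ = ((n * p + 1) ^ (-1 / p) / n.factorial) * (1 / (s + 1)) ^ (1 / q) *
          ((d - c) ^ (n + 1) * (A + B) ^ (1 / q)) := by
        rw [show (d - c) / (s + 1) * (A + B) = (d - c) * (1 / (s + 1)) * (A + B) by ring,
          Real.mul_rpow (mul_nonneg hL hS) hAB, Real.mul_rpow hL hS,
          Real.div_rpow (div_nonneg (Real.rpow_nonneg hL _) hK.le) (Real.rpow_nonneg hN.le _),
          Real.div_rpow (Real.rpow_nonneg hL _) hK.le, ← Real.rpow_mul hL,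
          ← Real.rpow_mul hN.le,
          mul_one_div_cancel hp.ne', Real.rpow_one, neg_div, Real.rpow_neg hK.le, ← hLpow]
        ring

theorem stmt8_general (I : Set ℝ) (f : ℝ → ℝ) (n : ℕ) (a b : ℝ)
    (hsub : Set.Icc a b ⊆ interior I)
    (hdiff : ∀ k < n, DifferentiableOn ℝ (iteratedDeriv k f) (interior I))
    (hint : IntervalIntegrable (iteratedDeriv n f) volume a b)
    (s : ℝ) (hs : s ∈ Set.Ioc (0:ℝ) 1) (p q : ℝ) (hq : 1 < q) (hp : p = q / (q - 1))
    (hsc : sConvexOn s (Set.Icc a b) (fun x => |iteratedDeriv n f x| ^ q))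
    (l : ℝ) (hl : l ∈ Set.Icc a b) :
    |(∑ m ∈ Finset.Icc 1 n, (-1:ℝ) ^ (n - m + 2) * (((l - a) ^ m - (l - b) ^ m) / (m.factorial : ℝ)) * iteratedDeriv (m - 1) f l) + (-1:ℝ) ^ n * (∫ x in a..b, f x)| ≤
      (((n:ℝ) * p + 1) ^ (-1 / p) / (n.factorial : ℝ)) * (1 / (s + 1)) ^ (1 / q) *
        ((l - a) ^ (n + 1) * (|iteratedDeriv n f a| ^ q + |iteratedDeriv n f l| ^ q) ^ (1 / q)
         + (b - l) ^ (n + 1) * (|iteratedDeriv n f b| ^ q + |iteratedDeriv n f l| ^ q) ^ (1 / q)) := by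
  obtain ⟨hal, hlb⟩ := hl
  have hab : a ≤ b := hal.trans hlb
  have hpq : p.HolderConjugate q := ((Real.holderConjugate_iff_eq_conjExponent hq).2 hp).symm
  have hderiv : ∀ k < n, ∀ x ∈ Icc a b,
      HasDerivAt (iteratedDeriv k f) (iteratedDeriv (k + 1) f x) x := fun k hk x hx => by
    rw [iteratedDeriv_succ]
    exact ((hdiff k hk).differentiableAt (isOpen_interior.mem_nhds (hsub hx))).hasDerivAt
  have hsign : ∀ m : ℕ, (-1 : ℝ) ^ (n - m + 2) = (-1) ^ (n - m) := fun m => by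
    rw [pow_add, neg_one_sq, mul_one]
  have hl : l ∈ uIcc a b := mem_uIcc_of_le hal hlb
  have hqpos : ∀ x, 0 ≤ |iteratedDeriv n f x| ^ q := fun x => by positivity
  simp only [hsign]
  rw [alternating_taylor_sum_add_integral_eq hal hlb n hderiv hint,
    add_comm (|iteratedDeriv n f b| ^ q)]
  calc _ ≤ _ := abs_add_le _ _
    _ ≤ _ := add_le_add
        (abs_integral_sub_pow_mul_le n hpq hs.1.le hal (Or.inl rfl)
          (hint.mono_set (uIcc_subset_uIcc_left hl)) (add_nonneg (hqpos a) (hqpos l))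
          fun x hx => hsc.le_of_mem_Icc ⟨le_rfl, hab⟩ ⟨hal, hlb⟩ (hx.1.trans_le hx.2)
            (Ioc_subset_Icc_self hx))
        (abs_integral_sub_pow_mul_le n hpq hs.1.le hlb (Or.inr rfl)
          (hint.mono_set (uIcc_subset_uIcc_right hl)) (add_nonneg (hqpos l) (hqpos b))
          fun x hx => hsc.le_of_mem_Icc ⟨hal, hlb⟩ ⟨hab, le_rfl⟩ (hx.1.trans_le hx.2)
            (Ioc_subset_Icc_self hx))
    _ = _ := by ring

theorem stmt8 (I : Set ℝ) (f : ℝ → ℝ) (n : ℕ) (a b : ℝ)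
    (hI : I ⊆ Set.Ici (0:ℝ)) (hab : a < b) (hsub : Set.Icc a b ⊆ interior I)
    (hdiff : ∀ k < n, DifferentiableOn ℝ (iteratedDeriv k f) (interior I))
    (hint : IntervalIntegrable (iteratedDeriv n f) volume a b)
    (s : ℝ) (hs : s ∈ Set.Ioc (0:ℝ) 1) (p q : ℝ) (hq : 1 < q) (hp : p = q / (q - 1))
    (hsc : sConvexOn s (Set.Icc a b) (fun x => |iteratedDeriv n f x| ^ q))
    (l : ℝ) (hl : l ∈ Set.Icc a b) :
    |(∑ m ∈ Finset.Icc 1 n, (-1:ℝ) ^ (n - m + 2) * (((l - a) ^ m - (l - b) ^ m) / (m.factorial : ℝ)) * iteratedDeriv (m - 1) f l) + (-1:ℝ) ^ n * (∫ x in a..b, f x)| ≤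
      (((n:ℝ) * p + 1) ^ (-1 / p) / (n.factorial : ℝ)) * (1 / (s + 1)) ^ (1 / q) *
        ((l - a) ^ (n + 1) * (|iteratedDeriv n f a| ^ q + |iteratedDeriv n f l| ^ q) ^ (1 / q)
         + (b - l) ^ (n + 1) * (|iteratedDeriv n f b| ^ q + |iteratedDeriv n f l| ^ q) ^ (1 / q)) :=
  stmt8_general I f n a b hsub hdiff hint s hs p q hq hp hsc l hl
end

section
/- Let f : I ⊂ [0,∞) → ℝ be n-times differentiable on I° with f^(n) ∈ L¹[a,b], a < b, and suppose |f^(n)|^q is s-concave on [a,b] for some s ∈ (0,1], q > 1, p = q/(q-1). Then for every λ ∈ [a,b]: |Σ_{m=1}^n (-1)^(n-m+2) [((λ-a)^m − (λ-b)^m)/m!] f^(m-1)(λ) + (-1)^n ∫_a^b f(x) dx| ≤ ((np+1)^(-1/p)/n!)·2^((s-1)/q)·[(λ-a)^(n+1)|f^(n)((a+λ)/2)| + (b-λ)^(n+1)|f^(n)((b+λ)/2)|]. -/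
/-! Taylor's formula with integral remainder, expanded at `λ` towards both endpoints, turns the
left-hand side into `|∫_a^λ (a-t)^n/n! f⁽ⁿ⁾ + ∫_λ^b (b-t)^n/n! f⁽ⁿ⁾|`. Each remainder is bounded by
Hölder's inequality: the kernel contributes its exact `Lᵖ` norm, and the `L^q` norm of `f⁽ⁿ⁾` is
controlled by the Hermite–Hadamard inequality `∫_c^d g ≤ 2^(s-1) (d-c) g((c+d)/2)` for the
`s`-concave `g = |f⁽ⁿ⁾|^q`, obtained by integrating `g x + g (c+d-x) ≤ 2^s g((c+d)/2)`.
The same midpoint inequality shows that `g` is bounded, hence integrable. -/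

open MeasureTheory intervalIntegral Finset

def sConcaveOn (s : ℝ) (A : Set ℝ) (g : ℝ → ℝ) : Prop :=
  ∀ x ∈ A, ∀ y ∈ A, ∀ t ∈ Set.Icc (0:ℝ) 1,
    t ^ s * g x + (1 - t) ^ s * g y ≤ g (t * x + (1 - t) * y)

open scoped Nat

lemma hasDerivAt_neg_sub_pow_succ_div_factorial (x t : ℝ) (N : ℕ) :
    HasDerivAt (fun u => -((x - u) ^ (N + 1) / (N + 1)!)) ((x - t) ^ N / N !) t := by
  have h := ((((hasDerivAt_id t).const_sub x).pow (N + 1)).div_const ((N + 1)! : ℝ)).neg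
  refine h.congr_deriv ?_
  rw [Nat.factorial_succ]
  push_cast
  field_simp
  simp

lemma integral_pow_div_factorial_mul_eq {g g' : ℝ → ℝ} {l x : ℝ} (N : ℕ)
    (hg : ∀ t ∈ Set.uIcc l x, HasDerivAt g (g' t) t) (hg' : IntervalIntegrable g' volume l x) :
    ∫ t in l..x, (x - t) ^ N / N ! * g t =
      (x - l) ^ (N + 1) / (N + 1)! * g l + ∫ t in l..x, (x - t) ^ (N + 1) / (N + 1)! * g' t := by
  have hker : IntervalIntegrable (fun t => (x - t) ^ N / N !) volume l x :=
    Continuous.intervalIntegrable (by fun_prop) _ _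
  have h := integral_mul_deriv_eq_deriv_mul hg
    (fun t _ => hasDerivAt_neg_sub_pow_succ_div_factorial x t N) hg' hker
  simp only [mul_comm (g _), mul_comm (g' _), sub_self, zero_pow N.succ_ne_zero, zero_div,
    neg_zero, zero_mul, neg_mul, intervalIntegral.integral_neg, sub_neg_eq_add, zero_add] at h
  exact h

lemma intervalIntegrable_iteratedDeriv_of_le {f : ℝ → ℝ} {a b : ℝ} {k n : ℕ} (hk : k ≤ n)
    (hf : ∀ j < n, ∀ t ∈ Set.uIcc a b, DifferentiableAt ℝ (iteratedDeriv j f) t)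
    (hfn : IntervalIntegrable (iteratedDeriv n f) volume a b) :
    IntervalIntegrable (iteratedDeriv k f) volume a b := by
  rcases hk.lt_or_eq with hk | rfl
  · exact ContinuousOn.intervalIntegrable fun t ht =>
      (hf k hk t ht).continuousAt.continuousWithinAt
  · exact hfn

theorem integral_eq_sum_add_integral_taylor_remainder {f : ℝ → ℝ} {l x : ℝ} (N : ℕ)
    (hf : ∀ k < N, ∀ t ∈ Set.uIcc l x, DifferentiableAt ℝ (iteratedDeriv k f) t)
    (hfN : IntervalIntegrable (iteratedDeriv N f) volume l x) :
    ∫ t in l..x, f t = ∑ m ∈ Icc 1 N, (x - l) ^ m / m ! * iteratedDeriv (m - 1) f l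
      + ∫ t in l..x, (x - t) ^ N / N ! * iteratedDeriv N f t := by
  induction N with
  | zero => simp
  | succ N ih =>
    have hderiv : ∀ t ∈ Set.uIcc l x,
        HasDerivAt (iteratedDeriv N f) (iteratedDeriv (N + 1) f t) t := fun t ht => by
      simpa only [iteratedDeriv_succ] using (hf N N.lt_succ_self t ht).hasDerivAt
    rw [ih (fun k hk => hf k (hk.trans N.lt_succ_self))
        (intervalIntegrable_iteratedDeriv_of_le N.le_succ hf hfN),
      integral_pow_div_factorial_mul_eq N hderiv hfN, sum_Icc_succ_top (by omega),
      Nat.add_sub_cancel]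
    ring

theorem integral_sub_sum_eq_taylor_remainders {f : ℝ → ℝ} {a b l : ℝ} (n : ℕ)
    (hl : l ∈ Set.uIcc a b)
    (hf : ∀ k < n, ∀ t ∈ Set.uIcc a b, DifferentiableAt ℝ (iteratedDeriv k f) t)
    (hfn : IntervalIntegrable (iteratedDeriv n f) volume a b) :
    (∫ t in a..b, f t)
        - ∑ m ∈ Icc 1 n, ((b - l) ^ m - (a - l) ^ m) / m ! * iteratedDeriv (m - 1) f l
      = (∫ t in a..l, (a - t) ^ n / n ! * iteratedDeriv n f t)
        + ∫ t in l..b, (b - t) ^ n / n ! * iteratedDeriv n f t := by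
  have hsub : ∀ x ∈ Set.uIcc a b, Set.uIcc l x ⊆ Set.uIcc a b := fun x hx =>
    Set.uIcc_subset_uIcc hl hx
  have taylor : ∀ x ∈ Set.uIcc a b, ∫ t in l..x, f t =
      ∑ m ∈ Icc 1 n, (x - l) ^ m / m ! * iteratedDeriv (m - 1) f l
        + ∫ t in l..x, (x - t) ^ n / n ! * iteratedDeriv n f t := fun x hx =>
    integral_eq_sum_add_integral_taylor_remainder n
      (fun k hk t ht => hf k hk t (hsub x hx ht)) (hfn.mono_set (hsub x hx))
  have hf0 : IntervalIntegrable f volume a b := by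
    simpa using intervalIntegrable_iteratedDeriv_of_le (Nat.zero_le n) hf hfn
  rw [← integral_add_adjacent_intervals (hf0.mono_set (hsub a Set.left_mem_uIcc)).symm
      (hf0.mono_set (hsub b Set.right_mem_uIcc)),
    integral_symm (f := f) l a, taylor a Set.left_mem_uIcc, taylor b Set.right_mem_uIcc,
    integral_symm a l]
  simp only [sub_div, sub_mul, sum_sub_distrib]
  ring

lemma sum_neg_one_pow_mul_sub_pow_eq (n : ℕ) (a b l : ℝ) (D : ℕ → ℝ) :
    ∑ m ∈ Icc 1 n, (-1 : ℝ) ^ (n - m + 2) * (((l - a) ^ m - (l - b) ^ m) / m !) * D m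
      = -((-1) ^ n * ∑ m ∈ Icc 1 n, ((b - l) ^ m - (a - l) ^ m) / m ! * D m) := by
  rw [mul_sum, ← sum_neg_distrib]
  refine sum_congr rfl fun m hm => ?_
  obtain ⟨k, rfl⟩ : ∃ k, n = m + k := ⟨n - m, by grind⟩
  rw [Nat.add_sub_cancel_left, pow_add, pow_add, show l - a = -1 * (a - l) by ring,
    show l - b = -1 * (b - l) by ring, mul_pow, mul_pow]
  ring

section sConcave

variable {s c d : ℝ} {A B : Set ℝ} {g : ℝ → ℝ}

lemma sConcaveOn.mono (h : sConcaveOn s A g) (hBA : B ⊆ A) : sConcaveOn s B g :=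
  fun x hx y hy => h x (hBA hx) y (hBA hy)

lemma sConcaveOn.add_le_two_rpow_mul_midpoint (h : sConcaveOn s A g) {x y : ℝ} (hx : x ∈ A)
    (hy : y ∈ A) : g x + g y ≤ 2 ^ s * g ((x + y) / 2) := by
  have h2 : (0 : ℝ) < 2 ^ s := by positivity
  have key := h x hx y hy (1 / 2) ⟨by norm_num, by norm_num⟩
  rw [show (1 : ℝ) - 1 / 2 = 1 / 2 by norm_num, show 1 / 2 * x + 1 / 2 * y = (x + y) / 2 by ring,
    Real.div_rpow zero_le_one zero_le_two, Real.one_rpow] at key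
  calc g x + g y = 2 ^ s * (1 / 2 ^ s * g x + 1 / 2 ^ s * g y) := by field_simp
    _ ≤ 2 ^ s * g ((x + y) / 2) := by gcongr

lemma sConcaveOn.le_two_rpow_mul_midpoint (h : sConcaveOn s (Set.Icc c d) g)
    (hg : ∀ x ∈ Set.Icc c d, 0 ≤ g x) {x : ℝ} (hx : x ∈ Set.Icc c d) :
    g x ≤ 2 ^ s * g ((c + d) / 2) := by
  have hx' : c + d - x ∈ Set.Icc c d := ⟨by linarith [hx.2], by linarith [hx.1]⟩
  have key := h.add_le_two_rpow_mul_midpoint hx hx'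
  rw [show (x + (c + d - x)) / 2 = (c + d) / 2 by ring] at key
  linarith [hg _ hx']

lemma sConcaveOn.intervalIntegrable (h : sConcaveOn s (Set.Icc c d) g) (hcd : c ≤ d)
    (hg : ∀ x ∈ Set.Icc c d, 0 ≤ g x)
    (hgm : AEStronglyMeasurable g (volume.restrict (Set.Ioc c d))) :
    IntervalIntegrable g volume c d := by
  refine (intervalIntegrable_const (c := 2 ^ s * g ((c + d) / 2))).mono_fun'
    (by rwa [Set.uIoc_of_le hcd]) ?_
  rw [Set.uIoc_of_le hcd]
  filter_upwards [ae_restrict_mem measurableSet_Ioc] with x hx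
  rw [Real.norm_of_nonneg (hg x (Set.Ioc_subset_Icc_self hx))]
  exact h.le_two_rpow_mul_midpoint hg (Set.Ioc_subset_Icc_self hx)

theorem sConcaveOn.integral_le (h : sConcaveOn s (Set.Icc c d) g) (hcd : c ≤ d)
    (hgi : IntervalIntegrable g volume c d) :
    ∫ x in c..d, g x ≤ 2 ^ (s - 1) * (d - c) * g ((c + d) / 2) := by
  have hrefl : IntervalIntegrable (fun x => g (c + d - x)) volume c d := by
    simpa using (hgi.comp_sub_left (c + d)).symm
  have key : ∫ x in c..d, (g x + g (c + d - x)) ≤ ∫ _ in c..d, 2 ^ s * g ((c + d) / 2) := by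
    refine integral_mono_on hcd (hgi.add hrefl) intervalIntegrable_const fun x hx => ?_
    have hx' : c + d - x ∈ Set.Icc c d := ⟨by linarith [hx.2], by linarith [hx.1]⟩
    simpa only [show (x + (c + d - x)) / 2 = (c + d) / 2 by ring]
      using h.add_le_two_rpow_mul_midpoint hx hx'
  rw [integral_add hgi hrefl, integral_comp_sub_left, add_sub_cancel_left, add_sub_cancel_right,
    intervalIntegral.integral_const, smul_eq_mul] at key
  rw [Real.rpow_sub two_pos, Real.rpow_one]
  linarith

end sConcave

lemma intervalIntegral_mul_le_Lp_mul_Lq_of_nonneg {p q c d : ℝ} (hpq : p.HolderConjugate q)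
    (hcd : c ≤ d) {f g : ℝ → ℝ} (hf0 : 0 ≤ᵐ[volume.restrict (Set.Ioc c d)] f)
    (hg0 : 0 ≤ᵐ[volume.restrict (Set.Ioc c d)] g)
    (hf : MemLp f (ENNReal.ofReal p) (volume.restrict (Set.Ioc c d)))
    (hg : MemLp g (ENNReal.ofReal q) (volume.restrict (Set.Ioc c d))) :
    ∫ x in c..d, f x * g x ≤
      (∫ x in c..d, f x ^ p) ^ (1 / p) * (∫ x in c..d, g x ^ q) ^ (1 / q) := by
  simpa only [integral_of_le hcd] using integral_mul_le_Lp_mul_Lq_of_nonneg hpq hf0 hg0 hf hg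

lemma integral_abs_sub_rpow_of_endpoint {c d x₀ r : ℝ} (hcd : c ≤ d) (hx₀ : x₀ = c ∨ x₀ = d)
    (hr : -1 < r) : ∫ t in c..d, |x₀ - t| ^ r = (d - c) ^ (r + 1) / (r + 1) := by
  have hr' : r + 1 ≠ 0 := by linarith
  rcases hx₀ with rfl | rfl
  · rw [integral_congr (g := fun t => (t - x₀) ^ r) fun t ht => by
        rw [Set.uIcc_of_le hcd] at ht
        simp only [abs_sub_comm x₀, abs_of_nonneg (sub_nonneg.2 ht.1)],
      integral_comp_sub_right (fun u => u ^ r), sub_self, integral_rpow (Or.inl hr),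
      Real.zero_rpow hr', sub_zero]
  · rw [integral_congr (g := fun t => (x₀ - t) ^ r) fun t ht => by
        rw [Set.uIcc_of_le hcd] at ht
        simp only [abs_of_nonneg (sub_nonneg.2 ht.2)],
      integral_comp_sub_left (fun u => u ^ r), sub_self, integral_rpow (Or.inl hr),
      Real.zero_rpow hr', sub_zero]

lemma rpow_add_one_div_mul_rpow_one_div {p q x : ℝ} (hpq : p.HolderConjugate q) (hx : 0 ≤ x)
    (n : ℕ) : x ^ ((n * p + 1) / p) * x ^ (1 / q) = x ^ (n + 1) := by
  have hexp : (n * p + 1) / p + 1 / q = n + 1 := by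
    have := hpq.inv_add_inv_eq_one
    field_simp [hpq.ne_zero] at this ⊢
    linarith
  rw [← Real.rpow_add' hx (by rw [hexp]; positivity), hexp]
  norm_cast

theorem abs_integral_taylor_remainder_le {F : ℝ → ℝ} {c d x₀ s p q : ℝ} (n : ℕ)
    (hpq : p.HolderConjugate q) (hcd : c ≤ d) (hx₀ : x₀ = c ∨ x₀ = d)
    (hF : IntervalIntegrable F volume c d)
    (hsc : sConcaveOn s (Set.Icc c d) fun x => |F x| ^ q) :
    |∫ t in c..d, (x₀ - t) ^ n / n ! * F t| ≤
      ((n * p + 1) ^ (-1 / p) / n !) * 2 ^ ((s - 1) / q) *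
        ((d - c) ^ (n + 1) * |F ((c + d) / 2)|) := by
  have hp := hpq.pos
  have hq := hpq.symm.pos
  have hFq : IntervalIntegrable (fun x => |F x| ^ q) volume c d :=
    hsc.intervalIntegrable hcd (fun x _ => by positivity) <| by
      simpa only [Real.norm_eq_abs] using
        (Real.continuous_rpow_const hq.le).comp_aestronglyMeasurable hF.aestronglyMeasurable.norm
  have hFmem : MemLp (fun x => |F x|) (ENNReal.ofReal q) (volume.restrict (Set.Ioc c d)) := by
    have hFq' : Integrable (fun x => ‖F x‖ ^ (ENNReal.ofReal q).toReal)
        (volume.restrict (Set.Ioc c d)) := by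
      simp only [ENNReal.toReal_ofReal hq.le, Real.norm_eq_abs]
      exact hFq.1
    simpa using ((integrable_norm_rpow_iff hF.aestronglyMeasurable (by simpa using hq)
      ENNReal.ofReal_ne_top).1 hFq').norm
  have hkmem :
      MemLp (fun t => |x₀ - t| ^ n) (ENNReal.ofReal p) (volume.restrict (Set.Ioc c d)) := by
    refine MemLp.of_bound (by fun_prop) ((d - c) ^ n) ?_
    filter_upwards [ae_restrict_mem measurableSet_Ioc] with t ht
    have : |x₀ - t| ≤ d - c := abs_sub_le_iff.2 <| by
      rcases hx₀ with rfl | rfl <;> constructor <;> linarith [ht.1, ht.2]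
    rw [norm_pow, Real.norm_eq_abs, abs_abs]
    gcongr
  have hkernel : ∫ t in c..d, (|x₀ - t| ^ n) ^ p = (d - c) ^ (n * p + 1) / (n * p + 1) := by
    rw [← integral_abs_sub_rpow_of_endpoint hcd hx₀ (by nlinarith [n.cast_nonneg (α := ℝ)])]
    congr with t
    rw [← Real.rpow_natCast, ← Real.rpow_mul (abs_nonneg _)]
  calc |∫ t in c..d, (x₀ - t) ^ n / n ! * F t|
      ≤ ∫ t in c..d, |(x₀ - t) ^ n / n ! * F t| := abs_integral_le_integral_abs hcd
    _ = (n ! : ℝ)⁻¹ * ∫ t in c..d, |x₀ - t| ^ n * |F t| := by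
        rw [← intervalIntegral.integral_const_mul]
        congr with t
        rw [abs_mul, abs_div, abs_pow, Nat.abs_cast]
        ring
    _ ≤ (n ! : ℝ)⁻¹ * ((∫ t in c..d, (|x₀ - t| ^ n) ^ p) ^ (1 / p) *
          (∫ t in c..d, |F t| ^ q) ^ (1 / q)) := by
        gcongr
        exact intervalIntegral_mul_le_Lp_mul_Lq_of_nonneg hpq hcd
          (ae_of_all _ fun _ => by positivity) (ae_of_all _ fun _ => by positivity) hkmem hFmem
    _ ≤ (n ! : ℝ)⁻¹ * (((d - c) ^ (n * p + 1) / (n * p + 1)) ^ (1 / p) *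
          (2 ^ (s - 1) * (d - c) * |F ((c + d) / 2)| ^ q) ^ (1 / q)) := by
        rw [hkernel]
        gcongr
        · exact integral_nonneg hcd fun _ _ => by positivity
        · exact hsc.integral_le hcd hFq
    _ = _ := by
        have hd : 0 ≤ d - c := sub_nonneg.2 hcd
        rw [Real.div_rpow (by positivity) (by positivity), ← Real.rpow_mul hd,
          Real.mul_rpow (by positivity) (by positivity), Real.mul_rpow (by positivity) hd,
          ← Real.rpow_mul zero_le_two, ← Real.rpow_mul (abs_nonneg _), mul_one_div_cancel hq.ne',
          Real.rpow_one, div_eq_mul_inv _ ((n * p + 1) ^ (1 / p)), ← Real.rpow_neg (by positivity),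
          ← rpow_add_one_div_mul_rpow_one_div hpq hd n]
        ring_nf

theorem stmt12_general (I : Set ℝ) (f : ℝ → ℝ) (n : ℕ) (a b : ℝ)
    (hsub : Set.Icc a b ⊆ interior I)
    (hdiff : ∀ k < n, DifferentiableOn ℝ (iteratedDeriv k f) (interior I))
    (hint : IntervalIntegrable (iteratedDeriv n f) volume a b)
    (s : ℝ) (p q : ℝ) (hq : 1 < q) (hp : p = q / (q - 1))
    (hsc : sConcaveOn s (Set.Icc a b) (fun x => |iteratedDeriv n f x| ^ q))
    (l : ℝ) (hl : l ∈ Set.Icc a b) :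
    |(∑ m ∈ Finset.Icc 1 n, (-1:ℝ) ^ (n - m + 2) * (((l - a) ^ m - (l - b) ^ m) / (m.factorial : ℝ)) * iteratedDeriv (m - 1) f l) + (-1:ℝ) ^ n * (∫ x in a..b, f x)| ≤
      (((n:ℝ) * p + 1) ^ (-1 / p) / (n.factorial : ℝ)) * (2:ℝ) ^ ((s - 1) / q) *
        ((l - a) ^ (n + 1) * |iteratedDeriv n f ((a + l) / 2)|
         + (b - l) ^ (n + 1) * |iteratedDeriv n f ((b + l) / 2)|) := by
  have hpq : p.HolderConjugate q := ((Real.holderConjugate_iff_eq_conjExponent hq).2 hp).symm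
  have hl' : l ∈ Set.uIcc a b := Set.Icc_subset_uIcc hl
  have hdiffAt : ∀ k < n, ∀ t ∈ Set.uIcc a b, DifferentiableAt ℝ (iteratedDeriv k f) t :=
    fun k hk t ht => (hdiff k hk).differentiableAt <| isOpen_interior.mem_nhds <|
      hsub (Set.uIcc_of_le (hl.1.trans hl.2) ▸ ht)
  have hleft := abs_integral_taylor_remainder_le n hpq hl.1 (Or.inl rfl)
    (hint.mono_set (Set.uIcc_subset_uIcc Set.left_mem_uIcc hl'))
    (hsc.mono (Set.Icc_subset_Icc_right hl.2))
  have hright := abs_integral_taylor_remainder_le n hpq hl.2 (Or.inr rfl)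
    (hint.mono_set (Set.uIcc_subset_uIcc hl' Set.right_mem_uIcc))
    (hsc.mono (Set.Icc_subset_Icc_left hl.1))
  rw [add_comm l b] at hright
  rw [sum_neg_one_pow_mul_sub_pow_eq, neg_add_eq_sub, ← mul_sub, abs_mul, abs_neg_one_pow, one_mul,
    integral_sub_sum_eq_taylor_remainders n hl' hdiffAt hint]
  calc _ ≤ _ := abs_add_le _ _
    _ ≤ _ := add_le_add hleft hright
    _ = _ := by ring

theorem stmt12 (I : Set ℝ) (f : ℝ → ℝ) (n : ℕ) (a b : ℝ)
    (hI : I ⊆ Set.Ici (0:ℝ)) (hab : a < b) (hsub : Set.Icc a b ⊆ interior I)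
    (hdiff : ∀ k < n, DifferentiableOn ℝ (iteratedDeriv k f) (interior I))
    (hint : IntervalIntegrable (iteratedDeriv n f) volume a b)
    (s : ℝ) (hs : s ∈ Set.Ioc (0:ℝ) 1) (p q : ℝ) (hq : 1 < q) (hp : p = q / (q - 1))
    (hsc : sConcaveOn s (Set.Icc a b) (fun x => |iteratedDeriv n f x| ^ q))
    (l : ℝ) (hl : l ∈ Set.Icc a b) :
    |(∑ m ∈ Finset.Icc 1 n, (-1:ℝ) ^ (n - m + 2) * (((l - a) ^ m - (l - b) ^ m) / (m.factorial : ℝ)) * iteratedDeriv (m - 1) f l) + (-1:ℝ) ^ n * (∫ x in a..b, f x)| ≤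
      (((n:ℝ) * p + 1) ^ (-1 / p) / (n.factorial : ℝ)) * (2:ℝ) ^ ((s - 1) / q) *
        ((l - a) ^ (n + 1) * |iteratedDeriv n f ((a + l) / 2)|
         + (b - l) ^ (n + 1) * |iteratedDeriv n f ((b + l) / 2)|) :=
  stmt12_general I f n a b hsub hdiff hint s p q hq hp hsc l hl
end
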